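/- Let S be an ordered face structure and a, b, c faces of the same dimension. If a <^∼ b and b <^+ c then a <^∼ c or a <^+ c. -/

import Mathlib

/-!  Ordered face structures, following M. Zawadowski,
"On ordered face structures and many-to-one computads".

We encode the graded set of faces as `F : ℕ → Type`, where `F (k+1)` is the set
of faces of dimension `k`, and `F 0` is an empty type playing the role of
`S₋₁`.  The codomain of a face of dimension `k+1` is a face of dimension `k`,
and its domain `δ` is a set of elements of `F (k+1) ⊕ F k`, where `Sum.inl x`
is a genuine face `x` and `Sum.inr u` stands for the empty face `1ᵤ` on `u`.
-/

structure PreOFS where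
  F : ℕ → Type
  γ : ∀ {k : ℕ}, F (k + 2) → F (k + 1)
  δ : ∀ {k : ℕ}, F (k + 2) → Set (F (k + 1) ⊕ F k)
  sim : ∀ {k : ℕ}, F (k + 1) → F (k + 1) → Prop

namespace PreOFS

variable (S : PreOFS)

/-- The genuine (non-empty) faces in the domain of `a`. -/
def realDom {k : ℕ} (a : S.F (k + 2)) : Set (S.F (k + 1)) :=
  {x | Sum.inl x ∈ S.δ a}

/-- `a` has empty domain (`δ(a) = 1ᵤ`). -/
def isEps {k : ℕ} (a : S.F (k + 2)) : Prop :=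
  ∃ u, Sum.inr u ∈ S.δ a

/-- `a` is a loop (`δ(a) = γ(a)` as sets). -/
def isLoop {k : ℕ} (a : S.F (k + 2)) : Prop :=
  S.δ a = {Sum.inl (S.γ a)}

/-- Codomain of a generalized face (`γ(1ᵤ) = u`). -/
def cod {k : ℕ} : S.F (k + 2) ⊕ S.F (k + 1) → S.F (k + 1)
  | Sum.inl x => S.γ x
  | Sum.inr u => u

/-- Domain of a generalized face (`δ(1ᵤ) = u`). -/
def domM {k : ℕ} : S.F (k + 2) ⊕ S.F (k + 1) → Set (S.F (k + 1) ⊕ S.F k)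
  | Sum.inl x => S.δ x
  | Sum.inr u => {Sum.inl u}

/-- `δ̇⁻ᵞ(a)`: the non-loop genuine faces in the domain of `a`. -/
def nlDom {k : ℕ} (a : S.F (k + 3)) : Set (S.F (k + 2)) :=
  {x | Sum.inl x ∈ S.δ a ∧ ¬ S.isLoop x}

/-- The strict upper order `<⁺`. -/
def ltP {k : ℕ} : S.F (k + 1) → S.F (k + 1) → Prop :=
  Relation.TransGen
    (fun a b => ∃ α : S.F (k + 2), ¬ S.isLoop α ∧ Sum.inl a ∈ S.δ α ∧ S.γ α = b)

def leP {k : ℕ} (a b : S.F (k + 1)) : Prop := a = b ∨ S.ltP a b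

/-- Comparability under `<⁺`. -/
def perpP {k : ℕ} (a b : S.F (k + 1)) : Prop := S.ltP a b ∨ S.ltP b a

/-- Comparability under `<∼`. -/
def perpS {k : ℕ} (a b : S.F (k + 1)) : Prop := S.sim a b ∨ S.sim b a

/-- The lower relation `<⁻`. -/
def ltM {k : ℕ} : S.F (k + 2) → S.F (k + 2) → Prop :=
  Relation.TransGen (fun a b => Sum.inl (S.γ a) ∈ S.δ b)

/-- `θ(a) = δ(a) ∪ γ(a)` (with empty faces). -/
def thetaFull {k : ℕ} (a : S.F (k + 2)) : Set (S.F (k + 1) ⊕ S.F k) :=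
  insert (Sum.inl (S.γ a)) (S.δ a)

/-- `θ̇(a)`: the genuine faces in `δ(a) ∪ γ(a)`. -/
def thetaDot {k : ℕ} (a : S.F (k + 2)) : Set (S.F (k + 1)) :=
  insert (S.γ a) (S.realDom a)

/-- `ι(b)`: the internal faces of `b`. -/
def iota {k : ℕ} (b : S.F (k + 3)) : Set (S.F (k + 1)) :=
  {u | ∃ x ∈ S.nlDom b, ∃ y ∈ S.nlDom b, S.γ x = u ∧ u ∈ S.realDom y}

/-- `A ≡₁ B` : equality of sets of generalized faces modulo empty faces. -/
def eq1 {k : ℕ} (A B : Set (S.F (k + 2) ⊕ S.F (k + 1))) : Prop :=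
  {x : S.F (k + 2) | Sum.inl x ∈ A} = {x : S.F (k + 2) | Sum.inl x ∈ B} ∧
    ({u : S.F (k + 1) | Sum.inr u ∈ A} ∪
        ⋃ x ∈ {x : S.F (k + 2) | Sum.inl x ∈ A}, S.thetaDot x) =
      ({u : S.F (k + 1) | Sum.inr u ∈ B} ∪
        ⋃ x ∈ {x : S.F (k + 2) | Sum.inl x ∈ B}, S.thetaDot x)

end PreOFS

namespace PreOFS

/-- Iterated codomain, going down `j` dimensions. -/
def down (S : PreOFS) : ∀ (k j : ℕ), S.F (k + j + 1) → S.F (k + 1)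
  | _, 0, a => a
  | k, j + 1, a => down S k j (S.γ a)

/-- `γ⁽ˡ⁾` : iterated codomain down to dimension `l`. -/
def gIter (S : PreOFS) {k : ℕ} (l : ℕ) (h : l ≤ k) (a : S.F (k + 1)) : S.F (l + 1) :=
  down S l (k - l) (_root_.cast (congrArg S.F (by omega : k + 1 = l + (k - l) + 1)) a)

/-- The combined order `<^S`. -/
def ltS (S : PreOFS) {k : ℕ} (a b : S.F (k + 1)) : Prop :=
  S.ltP a b ∨ ∃ l : ℕ, ∃ h : l ≤ k, S.sim (S.gIter l h a) (S.gIter l h b)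

end PreOFS

/-- The axioms of an ordered face structure. -/
structure IsOFS (S : PreOFS) : Prop where
  empty_bot : IsEmpty (S.F 0)
  fin : ∀ k, Finite (S.F k)
  bdd : ∃ n, ∀ k, n < k → IsEmpty (S.F k)
  nonempty₀ : Nonempty (S.F 1)
  dom_nonempty : ∀ {k : ℕ} (a : S.F (k + 2)), (S.δ a).Nonempty
  dom_eps : ∀ {k : ℕ} (a : S.F (k + 2)) (u : S.F k),
    Sum.inr u ∈ S.δ a → S.δ a = {Sum.inr u}
  dom_dim1 : ∀ a : S.F 2, ∃ x, S.δ a = {Sum.inl x}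
  glob_γ : ∀ {k : ℕ} (a : S.F (k + 3)),
    ({S.γ (S.γ a)} : Set (S.F (k + 1))) =
      {y | ∃ e ∈ S.δ a, S.cod e = y} \ (⋃ x ∈ S.nlDom a, S.realDom x)
  glob_δ_low : ∀ a : S.F 3,
    S.realDom (S.γ a) =
      (⋃ e ∈ S.δ a, {x : S.F 1 | Sum.inl x ∈ S.domM e}) \
        {y : S.F 1 | ∃ x ∈ S.nlDom a, S.γ x = y}
  glob_δ : ∀ {k : ℕ} (a : S.F (k + 4)),
    S.eq1 (S.δ (S.γ a))
      ((⋃ e ∈ S.δ a, S.domM e) \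
        {e : S.F (k + 2) ⊕ S.F (k + 1) | ∃ x ∈ S.nlDom a, Sum.inl (S.γ x) = e})
  local_disc : ∀ {k : ℕ} (a : S.F (k + 2)) (x y : S.F (k + 1)),
    Sum.inl x ∈ S.δ a → Sum.inl y ∈ S.δ a → ¬ S.ltP x y
  strictP : ∀ {k : ℕ} (x : S.F (k + 1)), ¬ S.ltP x x
  linearP₀ : ∀ x y : S.F 1, x = y ∨ S.ltP x y ∨ S.ltP y x
  sim_irrefl : ∀ {k : ℕ} (x : S.F (k + 1)), ¬ S.sim x x
  sim_trans : ∀ {k : ℕ} (x y z : S.F (k + 1)), S.sim x y → S.sim y z → S.sim x z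
  disj : ∀ {k : ℕ} (x y : S.F (k + 1)), S.perpS x y → ¬ S.perpP x y
  sim_lt_minus : ∀ {k : ℕ} (a b : S.F (k + 2)), S.sim a b → S.ltM a b
  sim_dim0 : ∀ x y : S.F 1, ¬ S.sim x y
  disj_theta : ∀ {k : ℕ} (a b : S.F (k + 2)),
    S.thetaFull a ∩ S.thetaFull b = ∅ → (S.sim a b ↔ S.ltM a b)
  pencil₁ : ∀ {k : ℕ} (a b : S.F (k + 2)), a ≠ b →
    (S.thetaDot a ∩ S.thetaDot b).Nonempty → S.perpS a b ∨ S.perpP a b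
  pencil₂ : ∀ {k : ℕ} (a b : S.F (k + 3)), S.isEps a →
    S.γ (S.γ a) ∈ S.iota b → S.sim a b ∨ S.ltP a b
  loop_fill : ∀ {k : ℕ} (x : S.F (k + 2)), S.isLoop x →
    ∃ α : S.F (k + 3), ¬ S.isLoop α ∧ S.γ α = x

/-!
Call two faces `a`, `c` of the same dimension comparable when `a = c` or they are related by
`<⁺` or by `<⁻` in either direction. Since `a <∼ b` gives `a <⁻ b`, the heart of the proof is
that `a <⁻ u <⁺ c` makes `a` and `c` comparable; the disjointness axioms then leave only
`a <∼ c` and `a <⁺ c`, every other alternative contradicting `a <∼ b <⁺ c`.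

Comparability is carried up a `<⁺`-chain from `u` to `c` one face `α` at a time: globularity
of `α` moves the wire `γ a` from the domain of a face of `δ α` either into the domain of `γ α`
or onto the codomain of a non-loop face of `δ α`. Local discreteness (no two faces of `δ α`
are `<⁺`-related) and upper linearity (the faces above a given face form a `<⁺`-chain, by
pencil linearity) settle the branching, and a loop `a` is traded, through a filler given by
loop-filling, for a `<⁺`-smaller loop on the same wire.
-/

namespace PreOFS

variable {S : PreOFS} {k : ℕ}

theorem ltP_trans {a b c : S.F (k + 1)} (hab : S.ltP a b) (hbc : S.ltP b c) : S.ltP a c :=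
  Relation.TransGen.trans hab hbc

theorem ltP_of_leP_of_ltP {a b c : S.F (k + 1)} (hab : S.leP a b) (hbc : S.ltP b c) :
    S.ltP a c := by
  rcases hab with rfl | hab
  exacts [hbc, ltP_trans hab hbc]

theorem ltP_of_ltP_of_leP {a b c : S.F (k + 1)} (hab : S.ltP a b) (hbc : S.leP b c) :
    S.ltP a c := by
  rcases hbc with rfl | hbc
  exacts [hab, ltP_trans hab hbc]

theorem leP_trans {a b c : S.F (k + 1)} (hab : S.leP a b) (hbc : S.leP b c) : S.leP a c := by
  rcases hab with rfl | hab
  exacts [hbc, Or.inr (ltP_of_ltP_of_leP hab hbc)]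

theorem ltP_of_mem_dom {a : S.F (k + 1)} {α : S.F (k + 2)} (hα : ¬ S.isLoop α)
    (ha : Sum.inl a ∈ S.δ α) : S.ltP a (S.γ α) :=
  Relation.TransGen.single ⟨α, hα, ha, rfl⟩

theorem ltP_head {a c : S.F (k + 1)} (h : S.ltP a c) :
    ∃ α, ¬ S.isLoop α ∧ Sum.inl a ∈ S.δ α ∧ S.leP (S.γ α) c := by
  obtain ⟨_, ⟨α, hα, ha, rfl⟩, hc⟩ := Relation.TransGen.head'_iff.mp h
  exact ⟨α, hα, ha, (Relation.reflTransGen_iff_eq_or_transGen.mp hc).imp Eq.symm id⟩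

theorem ltP_tail {a c : S.F (k + 1)} (h : S.ltP a c) :
    ∃ m α, S.leP a m ∧ ¬ S.isLoop α ∧ Sum.inl m ∈ S.δ α ∧ S.γ α = c := by
  obtain ⟨m, ha, α, hα, hm, rfl⟩ := Relation.TransGen.tail'_iff.mp h
  exact ⟨m, α, (Relation.reflTransGen_iff_eq_or_transGen.mp ha).imp Eq.symm id, hα, hm, rfl⟩

theorem eq_gamma_of_isLoop {v : S.F (k + 2)} (hv : S.isLoop v) {w : S.F (k + 1)}
    (hw : Sum.inl w ∈ S.δ v) : w = S.γ v := by
  rw [hv] at hw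
  simpa using hw

theorem leP_gamma_of_mem_dom {v : S.F (k + 2)} {w : S.F (k + 1)} (hw : Sum.inl w ∈ S.δ v) :
    S.leP w (S.γ v) := by
  by_cases hv : S.isLoop v
  exacts [Or.inl (eq_gamma_of_isLoop hv hw), Or.inr (ltP_of_mem_dom hv hw)]

theorem ltM_of_mem_dom {a b : S.F (k + 2)} (h : Sum.inl (S.γ a) ∈ S.δ b) : S.ltM a b :=
  Relation.TransGen.single h

theorem ltM_trans {a b c : S.F (k + 2)} (hab : S.ltM a b) (hbc : S.ltM b c) : S.ltM a c :=
  Relation.TransGen.trans hab hbc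

theorem leP_gamma_of_ltM {u v : S.F (k + 2)} (h : S.ltM u v) : S.leP (S.γ u) (S.γ v) := by
  induction h with
  | single h => exact leP_gamma_of_mem_dom h
  | tail _ h ih => exact leP_trans ih (leP_gamma_of_mem_dom h)

theorem ltP_gamma_of_ltM {u v : S.F (k + 2)} (h : S.ltM u v) (hv : ¬ S.isLoop v) :
    S.ltP (S.γ u) (S.γ v) := by
  obtain ⟨b, hub, hbv⟩ := Relation.TransGen.tail'_iff.mp h
  refine ltP_of_leP_of_ltP ?_ (ltP_of_mem_dom hv hbv)
  rcases Relation.reflTransGen_iff_eq_or_transGen.mp hub with rfl | hub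
  exacts [Or.inl rfl, leP_gamma_of_ltM hub]

theorem ltM_of_gamma_eq {a z c : S.F (k + 2)} (h : S.γ a = S.γ z) (hz : S.ltM z c) :
    S.ltM a c := by
  obtain ⟨v, hzv, hvc⟩ := Relation.TransGen.head'_iff.mp hz
  exact Relation.TransGen.head' (h ▸ hzv) hvc

theorem ltM_of_dom_eq {a z c : S.F (k + 2)} (h : S.δ z = S.δ a) (hz : S.ltM c z) :
    S.ltM c a := by
  obtain ⟨v, hcv, hvz⟩ := Relation.TransGen.tail'_iff.mp hz
  exact Relation.TransGen.tail' hcv (h ▸ hvz)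

theorem mem_thetaDot {a : S.F (k + 2)} {x : S.F (k + 1)} :
    x ∈ S.thetaDot a ↔ x = S.γ a ∨ Sum.inl x ∈ S.δ a :=
  Iff.rfl

theorem mem_thetaDot_gamma (a : S.F (k + 2)) : S.γ a ∈ S.thetaDot a :=
  mem_thetaDot.2 (Or.inl rfl)

theorem mem_thetaDot_of_mem_dom {a : S.F (k + 2)} {x : S.F (k + 1)} (h : Sum.inl x ∈ S.δ a) :
    x ∈ S.thetaDot a :=
  mem_thetaDot.2 (Or.inr h)

theorem inl_mem_thetaFull {a : S.F (k + 2)} {x : S.F (k + 1)} :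
    Sum.inl x ∈ S.thetaFull a ↔ x ∈ S.thetaDot a := by
  simp [thetaFull, thetaDot, realDom]

theorem inr_mem_thetaFull {a : S.F (k + 2)} {w : S.F k} :
    Sum.inr w ∈ S.thetaFull a ↔ Sum.inr w ∈ S.δ a := by
  simp [thetaFull]

def Comparable (S : PreOFS) {k : ℕ} (a c : S.F (k + 2)) : Prop :=
  a = c ∨ S.perpP a c ∨ Relation.SymmGen S.ltM a c

namespace Comparable

variable {a c : S.F (k + 2)}

theorem of_ltP (h : S.ltP a c) : S.Comparable a c := Or.inr (Or.inl (Or.inl h))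

theorem of_gtP (h : S.ltP c a) : S.Comparable a c := Or.inr (Or.inl (Or.inr h))

theorem of_ltM (h : S.ltM a c) : S.Comparable a c := Or.inr (Or.inr (Or.inl h))

theorem of_gtM (h : S.ltM c a) : S.Comparable a c := Or.inr (Or.inr (Or.inr h))

theorem of_leP (h : S.leP a c) : S.Comparable a c := h.elim Or.inl of_ltP

theorem of_trichotomous (h : a = c ∨ S.ltP a c ∨ S.ltP c a) : S.Comparable a c :=
  h.elim Or.inl fun h => h.elim of_ltP of_gtP

end Comparable

end PreOFS

namespace IsOFS

open PreOFS

variable {S : PreOFS} {k : ℕ}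

theorem ltP_irrefl (hS : IsOFS S) (a : S.F (k + 1)) : ¬ S.ltP a a :=
  hS.strictP a

theorem not_ltP_of_leP (hS : IsOFS S) {a b : S.F (k + 1)} (h : S.leP a b) : ¬ S.ltP b a :=
  fun hba => hS.ltP_irrefl b (ltP_of_ltP_of_leP hba h)

theorem leP_antisymm (hS : IsOFS S) {a b : S.F (k + 1)} (hab : S.leP a b) (hba : S.leP b a) :
    a = b :=
  hab.elim id fun hab => absurd hab (hS.not_ltP_of_leP hba)

theorem wellFounded_ltP (hS : IsOFS S) : WellFounded (S.ltP (k := k)) := by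
  have := hS.fin (k + 1)
  have : IsTrans (S.F (k + 1)) S.ltP := ⟨fun _ _ _ => ltP_trans⟩
  have : Std.Irrefl (S.ltP (k := k)) := ⟨hS.strictP⟩
  exact Finite.wellFounded_of_trans_of_irrefl _

theorem wellFounded_gtP (hS : IsOFS S) : WellFounded (Function.swap (S.ltP (k := k))) := by
  have := hS.fin (k + 1)
  have : IsTrans (S.F (k + 1)) (Function.swap S.ltP) := ⟨fun _ _ _ hab hbc => ltP_trans hbc hab⟩
  have : Std.Irrefl (Function.swap (S.ltP (k := k))) := ⟨hS.strictP⟩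
  exact Finite.wellFounded_of_trans_of_irrefl _

theorem not_ltM_of_inr_mem_dom (hS : IsOFS S) {u v : S.F (k + 2)} (h : S.ltM u v) {w : S.F k}
    (hw : Sum.inr w ∈ S.δ v) : False := by
  obtain ⟨b, -, hbv⟩ := Relation.TransGen.tail'_iff.mp h
  rw [hS.dom_eps v w hw] at hbv
  simp at hbv

theorem gamma_ltP_of_sim (hS : IsOFS S) {a b : S.F (k + 2)} (h : S.sim a b)
    (hb : ¬ S.isLoop b) : S.ltP (S.γ a) (S.γ b) :=
  ltP_gamma_of_ltM (hS.sim_lt_minus a b h) hb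

theorem not_sim_of_gamma_eq (hS : IsOFS S) {a b : S.F (k + 2)} (h : S.γ a = S.γ b)
    (hb : ¬ S.isLoop b) : ¬ S.sim a b := fun hab =>
  hS.ltP_irrefl _ (h ▸ hS.gamma_ltP_of_sim hab hb)

theorem gamma_eq_or_mem_dom_of_mem_dom (hS : IsOFS S) (Γ : S.F (k + 3)) {x : S.F (k + 2)}
    (hx : Sum.inl x ∈ S.δ Γ) :
    S.γ x = S.γ (S.γ Γ) ∨ ∃ y, Sum.inl y ∈ S.δ Γ ∧ ¬ S.isLoop y ∧ Sum.inl (S.γ x) ∈ S.δ y := by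
  by_cases h : S.γ x ∈ ⋃ y ∈ S.nlDom Γ, S.realDom y
  · obtain ⟨y, ⟨hyΓ, hy⟩, hxy⟩ := Set.mem_iUnion₂.mp h
    exact Or.inr ⟨y, hyΓ, hy, hxy⟩
  · have : S.γ x ∈ ({S.γ (S.γ Γ)} : Set (S.F (k + 1))) := by
      rw [hS.glob_γ Γ]
      exact ⟨⟨Sum.inl x, hx, rfl⟩, h⟩
    exact Or.inl this

theorem mem_dom_gamma_or_eq_gamma_of_mem_dom (hS : IsOFS S) (α : S.F (k + 3)) {b : S.F (k + 2)}
    (hb : Sum.inl b ∈ S.δ α) {w : S.F (k + 1)} (hw : Sum.inl w ∈ S.δ b) :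
    Sum.inl w ∈ S.δ (S.γ α) ∨ ∃ x, Sum.inl x ∈ S.δ α ∧ ¬ S.isLoop x ∧ S.γ x = w := by
  by_cases h : ∃ x, Sum.inl x ∈ S.δ α ∧ ¬ S.isLoop x ∧ S.γ x = w
  · exact Or.inr h
  refine Or.inl ?_
  cases k with
  | zero =>
    change w ∈ S.realDom (S.γ α)
    rw [hS.glob_δ_low α]
    exact ⟨Set.mem_biUnion hb hw, fun ⟨x, ⟨hxα, hx⟩, hxw⟩ => h ⟨x, hxα, hx, hxw⟩⟩
  | succ k =>
    change w ∈ {x | Sum.inl x ∈ S.δ (S.γ α)}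
    rw [(hS.glob_δ α).1]
    exact ⟨Set.mem_biUnion hb hw, fun ⟨x, ⟨hxα, hx⟩, hxw⟩ => h ⟨x, hxα, hx, Sum.inl_injective hxw⟩⟩

theorem exists_mem_dom_of_mem_dom_gamma (hS : IsOFS S) {Γ : S.F (k + 3)} (hΓ : ¬ S.isEps Γ)
    {w : S.F (k + 1)} (hw : Sum.inl w ∈ S.δ (S.γ Γ)) :
    ∃ z, Sum.inl z ∈ S.δ Γ ∧ Sum.inl w ∈ S.δ z := by
  obtain ⟨e, he, hwe⟩ : ∃ e ∈ S.δ Γ, Sum.inl w ∈ S.domM e := by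
    cases k with
    | zero =>
      have : w ∈ S.realDom (S.γ Γ) := hw
      rw [hS.glob_δ_low Γ] at this
      simpa using this.1
    | succ k =>
      have : w ∈ {x | Sum.inl x ∈ S.δ (S.γ Γ)} := hw
      rw [(hS.glob_δ Γ).1] at this
      simpa using this.1
  rcases e with z | u
  exacts [⟨z, he, hwe⟩, absurd ⟨u, he⟩ hΓ]

theorem exists_ltM_gamma_eq (hS : IsOFS S) (Γ : S.F (k + 3)) {s : S.F (k + 2)}
    (hs : Sum.inl s ∈ S.δ Γ) :
    ∃ σ, Sum.inl σ ∈ S.δ Γ ∧ S.γ σ = S.γ (S.γ Γ) ∧ (σ = s ∨ S.ltM s σ ∧ ¬ S.isLoop σ) := by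
  induction s using (InvImage.wf S.γ hS.wellFounded_gtP).induction with
  | _ s ih =>
  rcases hS.gamma_eq_or_mem_dom_of_mem_dom Γ hs with h | ⟨y, hyΓ, hy, hsy⟩
  · exact ⟨s, hs, h, Or.inl rfl⟩
  obtain ⟨σ, hσΓ, hσ, hyσ⟩ := ih y (ltP_of_mem_dom hy hsy) hyΓ
  refine ⟨σ, hσΓ, hσ, Or.inr ?_⟩
  rcases hyσ with rfl | ⟨hyσ, hσl⟩
  exacts [⟨ltM_of_mem_dom hsy, hy⟩, ⟨Relation.TransGen.head hsy hyσ, hσl⟩]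

theorem gamma_leP_of_mem_dom (hS : IsOFS S) {Γ : S.F (k + 3)} {e : S.F (k + 2)}
    (he : Sum.inl e ∈ S.δ Γ) : S.leP (S.γ e) (S.γ (S.γ Γ)) := by
  obtain ⟨σ, -, hσ, rfl | ⟨heσ, -⟩⟩ := hS.exists_ltM_gamma_eq Γ he
  exacts [Or.inl hσ, hσ ▸ leP_gamma_of_ltM heσ]

theorem gamma_leP_of_ltP (hS : IsOFS S) {u v : S.F (k + 2)} (h : S.ltP u v) :
    S.leP (S.γ u) (S.γ v) := by
  induction h with
  | single h =>
    obtain ⟨α, -, hu, rfl⟩ := h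
    exact hS.gamma_leP_of_mem_dom hu
  | tail _ h ih =>
    obtain ⟨α, -, hb, rfl⟩ := h
    exact leP_trans ih (hS.gamma_leP_of_mem_dom hb)

theorem gamma_leP_of_leP (hS : IsOFS S) {u v : S.F (k + 2)} (h : S.leP u v) :
    S.leP (S.γ u) (S.γ v) := by
  rcases h with rfl | h
  exacts [Or.inl rfl, hS.gamma_leP_of_ltP h]

theorem gamma_trichotomous (hS : IsOFS S) {β ρ : S.F (k + 2)} (hβ : ¬ S.isLoop β)
    (hρ : ¬ S.isLoop ρ) (h : (S.thetaDot β ∩ S.thetaDot ρ).Nonempty) :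
    S.γ β = S.γ ρ ∨ S.ltP (S.γ β) (S.γ ρ) ∨ S.ltP (S.γ ρ) (S.γ β) := by
  by_cases hβρ : β = ρ
  · exact Or.inl (congrArg S.γ hβρ)
  rcases hS.pencil₁ β ρ hβρ h with (h | h) | (h | h)
  · exact Or.inr (Or.inl (hS.gamma_ltP_of_sim h hρ))
  · exact Or.inr (Or.inr (hS.gamma_ltP_of_sim h hβ))
  · exact (hS.gamma_leP_of_ltP h).imp_right Or.inl
  · exact (hS.gamma_leP_of_ltP h).elim (Or.inl ∘ Eq.symm) (Or.inr ∘ Or.inr)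

theorem trichotomous_of_leP_of_leP (hS : IsOFS S) {z p q : S.F (k + 1)} (hp : S.leP z p)
    (hq : S.leP z q) : p = q ∨ S.ltP p q ∨ S.ltP q p := by
  induction z using hS.wellFounded_gtP.induction with
  | _ z ih =>
  rcases hp with rfl | hzp
  · exact hq.imp_right Or.inl
  rcases hq with rfl | hzq
  · exact Or.inr (Or.inr hzp)
  obtain ⟨β, hβ, hzβ, hβp⟩ := ltP_head hzp
  obtain ⟨ρ, hρ, hzρ, hρq⟩ := ltP_head hzq
  have hzβ' := ltP_of_mem_dom hβ hzβ
  have hzρ' := ltP_of_mem_dom hρ hzρ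
  rcases hS.gamma_trichotomous hβ hρ
      ⟨z, mem_thetaDot_of_mem_dom hzβ, mem_thetaDot_of_mem_dom hzρ⟩ with h | h | h
  · exact ih _ hzβ' hβp (h ▸ hρq)
  · exact ih _ hzβ' hβp (Or.inr (ltP_of_ltP_of_leP h hρq))
  · exact ih _ hzρ' (Or.inr (ltP_of_ltP_of_leP h hβp)) hρq

theorem eq_or_ltP_or_ltP_of_gamma_eq (hS : IsOFS S) {a b : S.F (k + 2)} (ha : ¬ S.isLoop a)
    (hb : ¬ S.isLoop b) (h : S.γ a = S.γ b) : a = b ∨ S.ltP a b ∨ S.ltP b a := by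
  by_cases hab : a = b
  · exact Or.inl hab
  rcases hS.pencil₁ a b hab ⟨_, mem_thetaDot_gamma a, h ▸ mem_thetaDot_gamma b⟩ with
    (h' | h') | h'
  · exact absurd h' (hS.not_sim_of_gamma_eq h hb)
  · exact absurd h' (hS.not_sim_of_gamma_eq h.symm ha)
  · exact Or.inr h'

theorem comparable_of_gamma_eq (hS : IsOFS S) {a c : S.F (k + 2)} (h : S.γ a = S.γ c) :
    S.Comparable a c := by
  by_cases hac : a = c
  · exact Or.inl hac
  rcases hS.pencil₁ a c hac ⟨_, mem_thetaDot_gamma a, h ▸ mem_thetaDot_gamma c⟩ with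
    (h | h) | h
  · exact .of_ltM (hS.sim_lt_minus a c h)
  · exact .of_gtM (hS.sim_lt_minus c a h)
  · exact Or.inr (Or.inl h)

theorem comparable_of_ltP_of_isLoop (hS : IsOFS S) {z a c : S.F (k + 2)} (hz : S.isLoop z)
    (ha : S.isLoop a) (hγ : S.γ z = S.γ a) (hza : S.ltP z a) (h : S.Comparable z c) :
    S.Comparable a c := by
  rcases h with rfl | (h | h) | (h | h)
  · exact .of_gtP hza
  · exact .of_trichotomous (hS.trichotomous_of_leP_of_leP (Or.inr hza) (Or.inr h))
  · exact .of_gtP (ltP_trans h hza)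
  · exact .of_ltM (ltM_of_gamma_eq hγ.symm h)
  · exact .of_gtM (ltM_of_dom_eq (by rw [hz, ha, hγ]) h)

section Step

variable {c : S.F (k + 2)} {α : S.F (k + 3)}

/- In the next three lemmas `α` is the first step of a `<⁺`-chain from a face of `δ α` to `c`,
and the claim is already known one step further up, at `γ α`. -/

theorem comparable_of_isLoop_of_mem_dom (hS : IsOFS S) (hα : ¬ S.isLoop α)
    (hαc : S.leP (S.γ α) c)
    (hH : ∀ a : S.F (k + 2), Sum.inl (S.γ a) ∈ S.δ (S.γ α) → S.Comparable a c)
    {y : S.F (k + 2)} (hyα : Sum.inl y ∈ S.δ α) (hy : ¬ S.isLoop y) :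
    ∀ a, S.isLoop a → Sum.inl (S.γ a) ∈ S.δ y → S.Comparable a c := by
  intro a
  induction a using hS.wellFounded_ltP.induction with
  | _ a ih =>
  intro ha hay
  obtain h | ⟨x, hxα, hx, hxa⟩ := hS.mem_dom_gamma_or_eq_gamma_of_mem_dom α hyα hay
  · exact hH a h
  obtain ⟨φ, hφ, rfl⟩ := hS.loop_fill a ha
  by_cases hφε : S.isEps φ
  · have hι : S.γ (S.γ φ) ∈ S.iota α := ⟨x, ⟨hxα, hx⟩, y, ⟨hyα, hy⟩, hxa, hay⟩
    have hφα : S.leP (S.γ φ) (S.γ α) := by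
      rcases hS.pencil₂ φ α hφε hι with h | h
      exacts [Or.inr (hS.gamma_ltP_of_sim h hα), hS.gamma_leP_of_ltP h]
    exact .of_leP (leP_trans hφα hαc)
  -- the loop `γ φ` reduces to a `<⁺`-smaller loop `z ∈ δ φ` on the same wire
  obtain ⟨z, hzφ, hz⟩ :=
    hS.exists_mem_dom_of_mem_dom_gamma hφε (by rw [ha]; exact Set.mem_singleton _)
  have hzl : S.isLoop z := by
    by_contra hzl
    exact hS.not_ltP_of_leP (hS.gamma_leP_of_mem_dom hzφ) (ltP_of_mem_dom hzl hz)
  have hγz : S.γ z = S.γ (S.γ φ) := (eq_gamma_of_isLoop hzl hz).symm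
  have hzφ' : S.ltP z (S.γ φ) := ltP_of_mem_dom hφ hzφ
  exact hS.comparable_of_ltP_of_isLoop hzl ha hγz hzφ' (ih z hzφ' hzl (hγz ▸ hay))

theorem comparable_of_gamma_mem_dom_of_mem_dom (hS : IsOFS S) (hα : ¬ S.isLoop α)
    (hαc : S.leP (S.γ α) c)
    (hH : ∀ a : S.F (k + 2), S.γ a ∈ S.thetaDot (S.γ α) → S.Comparable a c)
    {u : S.F (k + 2)} (hu : Sum.inl u ∈ S.δ α) {a : S.F (k + 2)}
    (ha : Sum.inl (S.γ a) ∈ S.δ u) : S.Comparable a c := by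
  have hH' : ∀ a : S.F (k + 2), Sum.inl (S.γ a) ∈ S.δ (S.γ α) → S.Comparable a c :=
    fun a h => hH a (mem_thetaDot_of_mem_dom h)
  by_cases hal : S.isLoop a
  · by_cases hul : S.isLoop u
    · have hγ : S.γ a = S.γ u := eq_gamma_of_isLoop hul ha
      rcases hS.gamma_eq_or_mem_dom_of_mem_dom α hu with h | ⟨y, hyα, hy, huy⟩
      · exact hH a (mem_thetaDot.2 (Or.inl (hγ.trans h)))
      · exact hS.comparable_of_isLoop_of_mem_dom hα hαc hH' hyα hy a hal (hγ ▸ huy)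
    · exact hS.comparable_of_isLoop_of_mem_dom hα hαc hH' hu hul a hal ha
  rcases hS.mem_dom_gamma_or_eq_gamma_of_mem_dom α hu ha with h | ⟨x, hxα, hx, hxa⟩
  · exact hH' a h
  have hxc : S.ltP x c := ltP_of_ltP_of_leP (ltP_of_mem_dom hα hxα) hαc
  rcases hS.eq_or_ltP_or_ltP_of_gamma_eq hal hx hxa.symm with rfl | h | h
  · exact .of_ltP hxc
  · exact .of_ltP (ltP_trans h hxc)
  · exact .of_trichotomous (hS.trichotomous_of_leP_of_leP (Or.inr h) (Or.inr hxc))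

theorem comparable_of_gamma_mem_thetaDot_of_mem_dom (hS : IsOFS S) (hα : ¬ S.isLoop α)
    (hαc : S.leP (S.γ α) c)
    (hH : ∀ a : S.F (k + 2), S.γ a ∈ S.thetaDot (S.γ α) → S.Comparable a c)
    {u : S.F (k + 2)} (hu : Sum.inl u ∈ S.δ α) {a : S.F (k + 2)}
    (ha : S.γ a ∈ S.thetaDot u) : S.Comparable a c := by
  rcases mem_thetaDot.1 ha with ha | ha
  · rcases hS.gamma_eq_or_mem_dom_of_mem_dom α hu with h | ⟨y, hyα, -, huy⟩
    · exact hH a (mem_thetaDot.2 (Or.inl (ha.trans h)))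
    · exact hS.comparable_of_gamma_mem_dom_of_mem_dom hα hαc hH hyα (ha ▸ huy)
  · exact hS.comparable_of_gamma_mem_dom_of_mem_dom hα hαc hH hu ha

end Step

theorem comparable_of_gamma_mem_thetaDot (hS : IsOFS S) {c : S.F (k + 2)} :
    ∀ v, S.leP v c → ∀ a, S.γ a ∈ S.thetaDot v → S.Comparable a c := by
  intro v
  induction v using hS.wellFounded_gtP.induction with
  | _ v ih =>
  intro hvc a ha
  rcases hvc with rfl | hvc
  · exact (mem_thetaDot.1 ha).elim hS.comparable_of_gamma_eq fun h => .of_ltM (ltM_of_mem_dom h)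
  obtain ⟨α, hα, hvα, hαc⟩ := ltP_head hvc
  exact hS.comparable_of_gamma_mem_thetaDot_of_mem_dom hα hαc
    (ih _ (ltP_of_mem_dom hα hvα) hαc) hvα ha

theorem comparable_of_gamma_mem_dom_of_ltP (hS : IsOFS S) {a u c : S.F (k + 2)}
    (ha : Sum.inl (S.γ a) ∈ S.δ u) (huc : S.ltP u c) : S.Comparable a c :=
  hS.comparable_of_gamma_mem_thetaDot u (Or.inr huc) a (mem_thetaDot_of_mem_dom ha)

theorem exists_ltM_of_ltM_gamma (hS : IsOFS S) {Γ : S.F (k + 3)} (hΓ : ¬ S.isEps Γ)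
    (hγΓ : ¬ S.isLoop (S.γ Γ)) {a : S.F (k + 2)} (hap : S.ltM a (S.γ Γ)) :
    ∃ σ, Sum.inl σ ∈ S.δ Γ ∧ S.γ σ = S.γ (S.γ Γ) ∧ ¬ S.isLoop σ ∧ S.ltM a σ := by
  obtain ⟨q, haq, hq⟩ := Relation.TransGen.tail'_iff.mp hap
  obtain ⟨s, hsΓ, hqs⟩ := hS.exists_mem_dom_of_mem_dom_gamma hΓ hq
  have has : S.ltM a s := Relation.TransGen.tail' haq hqs
  obtain ⟨σ, hσΓ, hγσ, rfl | ⟨hsσ, hσ⟩⟩ := hS.exists_ltM_gamma_eq Γ hsΓ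
  · refine ⟨σ, hσΓ, hγσ, fun hσ => ?_, has⟩
    rw [← eq_gamma_of_isLoop hσ hqs] at hγσ
    exact hS.ltP_irrefl _ (hγσ ▸ ltP_of_mem_dom hγΓ hq)
  · exact ⟨σ, hσΓ, hγσ, hσ, ltM_trans has hsσ⟩

theorem comparable_of_ltM_of_gtP (hS : IsOFS S) {a c : S.F (k + 2)} :
    ∀ p, S.ltM a p → S.ltP c p → ¬ S.isLoop p → S.γ c = S.γ p → S.Comparable a c := by
  intro p
  induction p using hS.wellFounded_ltP.induction with
  | _ p ih =>
  intro hap hcp hp hγ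
  obtain ⟨M, Γ, hcM, hΓ, hMΓ, rfl⟩ := ltP_tail hcp
  have hγM : S.γ M = S.γ (S.γ Γ) :=
    hS.leP_antisymm (hS.gamma_leP_of_mem_dom hMΓ) (hγ ▸ hS.gamma_leP_of_leP hcM)
  have hΓε : ¬ S.isEps Γ := fun ⟨w, hw⟩ => by simp [hS.dom_eps Γ w hw] at hMΓ
  obtain ⟨σ, hσΓ, hγσ, hσ, haσ⟩ := hS.exists_ltM_of_ltM_gamma hΓε hp hap
  by_cases hσM : σ = M
  · subst hσM
    rcases hcM with rfl | hcσ
    · exact .of_ltM haσ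
    · exact ih σ (ltP_of_mem_dom hΓ hσΓ) haσ hcσ hσ (hγ.trans hγM.symm)
  -- `σ` and `M` are distinct faces of `δ Γ`, so they have no common lower bound
  have hσM' : ¬ S.ltP σ M := hS.local_disc Γ σ M hσΓ hMΓ
  have hMσ : ¬ S.ltP M σ := hS.local_disc Γ M σ hMΓ hσΓ
  by_cases hσc : σ = c
  · subst hσc
    exact .of_ltM haσ
  have hγσc : S.γ σ = S.γ c := hγσ.trans hγ.symm
  rcases hS.pencil₁ σ c hσc ⟨_, mem_thetaDot_gamma σ, hγσc ▸ mem_thetaDot_gamma c⟩ with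
    (h | h) | (h | h)
  · exact .of_ltM (ltM_trans haσ (hS.sim_lt_minus σ c h))
  · exact absurd h (hS.not_sim_of_gamma_eq hγσc.symm hσ)
  · exact absurd (ltP_of_ltP_of_leP h hcM) hσM'
  · rcases hS.trichotomous_of_leP_of_leP (Or.inr h) hcM with h' | h' | h'
    exacts [absurd h' hσM, absurd h' hσM', absurd h' hMσ]

theorem comparable_of_ltM_of_gamma_mem_dom (hS : IsOFS S) {a p c : S.F (k + 2)}
    (hap : S.ltM a p) (hp : ¬ S.isLoop p) (hQ : ∀ c, S.ltP p c → S.Comparable a c) :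
    ∀ u, S.ltP u c → Sum.inl (S.γ p) ∈ S.δ u → S.Comparable a c := by
  intro u
  induction u using hS.wellFounded_gtP.induction with
  | _ u ih =>
  intro huc hpu
  obtain ⟨α, hα, huα, hαc⟩ := ltP_head huc
  rcases hS.mem_dom_gamma_or_eq_gamma_of_mem_dom α huα hpu with h | ⟨x, hxα, hx, hxp⟩
  · rcases hαc with rfl | hαc
    · exact .of_ltM (Relation.TransGen.tail hap h)
    · exact ih _ (ltP_of_mem_dom hα huα) hαc h
  have hxc : S.ltP x c := ltP_of_ltP_of_leP (ltP_of_mem_dom hα hxα) hαc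
  rcases hS.eq_or_ltP_or_ltP_of_gamma_eq hp hx hxp.symm with rfl | hpx | hxp'
  · exact hQ c hxc
  · exact hQ c (ltP_trans hpx hxc)
  by_cases hpu' : p = u
  · subst hpu'
    exact hQ c huc
  rcases hS.pencil₁ p u hpu' ⟨_, mem_thetaDot_gamma p, mem_thetaDot_of_mem_dom hpu⟩ with
    (h | h) | (h | h)
  · rcases hS.trichotomous_of_leP_of_leP (Or.inr hxp') (Or.inr hxc) with rfl | h' | h'
    · exact .of_ltM hap
    · exact hQ c h'
    · exact absurd (Or.inr (ltP_trans huc h')) (hS.disj p u (Or.inl h))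
  · exact absurd (hS.gamma_ltP_of_sim h hp) (hS.not_ltP_of_leP (leP_gamma_of_mem_dom hpu))
  · exact hQ c (ltP_trans h huc)
  · have hul : S.isLoop u := by
      by_contra hul
      exact hS.not_ltP_of_leP (hS.gamma_leP_of_ltP h) (ltP_of_mem_dom hul hpu)
    have hγ : S.γ p = S.γ u := eq_gamma_of_isLoop hul hpu
    rcases hS.trichotomous_of_leP_of_leP (Or.inr h) (Or.inr huc) with rfl | h' | h'
    · exact .of_ltM hap
    · exact hQ c h'
    · exact hS.comparable_of_ltM_of_gtP p hap h' hp
        (hS.leP_antisymm (hS.gamma_leP_of_ltP h') (hγ ▸ hS.gamma_leP_of_ltP huc))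

theorem comparable_of_ltM_of_ltP (hS : IsOFS S) {a u c : S.F (k + 2)} (hau : S.ltM a u)
    (huc : S.ltP u c) : S.Comparable a c := by
  -- quantifying over the successors `u` of `p` lets the induction skip loops `p`
  have hsucc : ∀ p, S.ltM a p →
      ∀ u c, Sum.inl (S.γ p) ∈ S.δ u → S.ltP u c → S.Comparable a c := by
    intro p hap
    induction hap with
    | @single p h =>
      intro u c hpu huc
      by_cases hp : S.isLoop p
      · exact hS.comparable_of_gamma_mem_dom_of_ltP (eq_gamma_of_isLoop hp h ▸ hpu) huc
      · exact hS.comparable_of_ltM_of_gamma_mem_dom (ltM_of_mem_dom h) hp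
          (fun _ => hS.comparable_of_gamma_mem_dom_of_ltP h) u huc hpu
    | @tail p' p hap' h ih =>
      intro u c hpu huc
      by_cases hp : S.isLoop p
      · exact ih u c (eq_gamma_of_isLoop hp h ▸ hpu) huc
      · exact hS.comparable_of_ltM_of_gamma_mem_dom (Relation.TransGen.tail hap' h) hp
          (fun c => ih p c h) u huc hpu
  cases hau with
  | single h => exact hS.comparable_of_gamma_mem_dom_of_ltP h huc
  | tail hap h => exact hsucc _ hap u c h huc

theorem perpS_or_perpP_of_ltM (hS : IsOFS S) {a c : S.F (k + 2)} (hac : a ≠ c)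
    (h : S.ltM a c) : S.perpS a c ∨ S.perpP a c := by
  by_cases hθ : S.thetaFull a ∩ S.thetaFull c = ∅
  · exact Or.inl (Or.inl ((hS.disj_theta a c hθ).2 h))
  obtain ⟨e | w, hea, hec⟩ := Set.nonempty_iff_ne_empty.2 hθ
  · exact hS.pencil₁ a c hac ⟨e, inl_mem_thetaFull.1 hea, inl_mem_thetaFull.1 hec⟩
  · exact (hS.not_ltM_of_inr_mem_dom h (inr_mem_thetaFull.1 hec)).elim

theorem eq_or_perpS_or_perpP_of_comparable (hS : IsOFS S) {a c : S.F (k + 2)}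
    (h : S.Comparable a c) : a = c ∨ S.perpS a c ∨ S.perpP a c := by
  by_cases hac : a = c
  · exact Or.inl hac
  rcases h with h | h | h | h
  · exact absurd h hac
  · exact Or.inr (Or.inr h)
  · exact Or.inr (hS.perpS_or_perpP_of_ltM hac h)
  · exact Or.inr ((hS.perpS_or_perpP_of_ltM (Ne.symm hac) h).imp Or.symm Or.symm)

end IsOFS

/-- if `a <∼ b` and `b <⁺ c` then `a <∼ c` or `a <⁺ c`. -/
theorem stmt9 (S : PreOFS) (hS : IsOFS S) {k : ℕ} (a b c : S.F (k + 1))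
    (h1 : S.sim a b) (h2 : S.ltP b c) : S.sim a c ∨ S.ltP a c := by
  cases k with
  | zero => exact absurd h1 (hS.sim_dim0 a b)
  | succ k =>
    have hab : ¬ S.perpP a b := hS.disj a b (Or.inl h1)
    rcases hS.eq_or_perpS_or_perpP_of_comparable
        (hS.comparable_of_ltM_of_ltP (hS.sim_lt_minus a b h1) h2) with rfl | (h | h) | (h | h)
    · exact absurd (Or.inr h2) hab
    · exact Or.inl h
    · exact absurd (Or.inr h2) (hS.disj c b (Or.inl (hS.sim_trans c a b h h1)))
    · exact Or.inr h
    · exact absurd (Or.inr (PreOFS.ltP_trans h2 h)) hab
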